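/- (Energy change of the 1D locally implicit ADER-DG scheme.) Consider the periodic 1D scheme with K ≥ 1 elements, CFL number ν ≥ 0, and previous-step data g_k, with predictors q̃_k and correctors q_k; assume additionally that each predictor matches the previous solution at the beginning of the time step, i.e. q̃_k(ξ, −1) = g_k(ξ) for all ξ ∈ ℝ. Set ψ_k := q_k − q̃_k. Then the energy change over one step satisfies ∑_{k} [∑_{i} w_i ½ q_k(ξ_i, 1)² − ∑_{i} w_i ½ g_k(ξ_i)²] = ∑_{k} [∑_{i} w_i ½ ψ_k(ξ_i, 1)² − ν ∑_{j} w_j ½ (q̃_{k−1}(1, ξ_j) − q̃_k(−1, ξ_j))²]; that is, the energy change equals the sum over elements of the discrete integral of half the squared predictor–corrector difference at the final time, minus ν times the discrete time-boundary integral of half the squared jump of the predictors across each element interface. -/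

import Mathlib

open BigOperators MvPolynomial

/-- Evaluation of a bivariate polynomial `Q` at the point `(x, t)`; variable `0` is the
space coordinate `ξ` and variable `1` is the time coordinate `τ`. -/
noncomputable def ev (Q : MvPolynomial (Fin 2) ℝ) (x t : ℝ) : ℝ :=
  MvPolynomial.eval ![x, t] Q

/-- `Vp p` is the space of real polynomial functions of `(ξ, τ)` of degree at most `p`
in each variable separately. -/
def Vp (p : ℕ) : Set (MvPolynomial (Fin 2) ℝ) :=
  {Q | Q.degreeOf 0 ≤ p ∧ Q.degreeOf 1 ≤ p}

/-- Discrete volume integral `⟨f⟩ = ∑ i j, w i * w j * f (ξ i) (ξ j)`. -/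
noncomputable def dVol {p : ℕ} (ξ w : Fin (p + 1) → ℝ) (f : ℝ → ℝ → ℝ) : ℝ :=
  ∑ i, ∑ j, w i * w j * f (ξ i) (ξ j)

/-- Discrete temporal-boundary integral `⟨f⟩_{τ=s} = ∑ i, w i * f (ξ i) s`. -/
noncomputable def dT {p : ℕ} (ξ w : Fin (p + 1) → ℝ) (f : ℝ → ℝ → ℝ) (s : ℝ) : ℝ :=
  ∑ i, w i * f (ξ i) s

/-- Discrete spatial-boundary integral `⟨f⟩_{ξ=s} = ∑ j, w j * f s (ξ j)`. -/
noncomputable def dX {p : ℕ} (ξ w : Fin (p + 1) → ℝ) (f : ℝ → ℝ → ℝ) (s : ℝ) : ℝ :=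
  ∑ j, w j * f s (ξ j)

/-- `q̃ ∈ V_p` satisfies the predictor equation with data `g` (a univariate polynomial
in `ξ`) and CFL number `ν` if for every `φ ∈ V_p`:
`⟨φ·(∂q̃/∂τ + ν ∂q̃/∂ξ)⟩ + ⟨φ·(q̃ − g)⟩_{τ=−1} = 0`. -/
def PredictorEq {p : ℕ} (ξ w : Fin (p + 1) → ℝ) (ν : ℝ) (g : Polynomial ℝ)
    (qt : MvPolynomial (Fin 2) ℝ) : Prop :=
  ∀ φ ∈ Vp p,
    dVol ξ w (fun x t => ev φ x t *
        (ev (pderiv 1 qt) x t + ν * ev (pderiv 0 qt) x t)) +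
      dT ξ w (fun x t => ev φ x t * (ev qt x t - g.eval x)) (-1) = 0

/-- `q ∈ V_p` satisfies the corrector equation with data `g` (a univariate polynomial
in `ξ`), left-flux trace `a` and right-flux trace `b` (univariate polynomials in `τ`)
and CFL number `ν` if for every `φ ∈ V_p`:
`⟨φ·(∂q/∂τ + ν ∂q/∂ξ)⟩ + ⟨φ·(q − g)⟩_{τ=−1} + ν ⟨φ·(b − q)⟩_{ξ=1} − ν ⟨φ·(a − q)⟩_{ξ=−1} = 0`. -/
def CorrectorEq {p : ℕ} (ξ w : Fin (p + 1) → ℝ) (ν : ℝ) (g a b : Polynomial ℝ)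
    (q : MvPolynomial (Fin 2) ℝ) : Prop :=
  ∀ φ ∈ Vp p,
    dVol ξ w (fun x t => ev φ x t *
        (ev (pderiv 1 q) x t + ν * ev (pderiv 0 q) x t)) +
      dT ξ w (fun x t => ev φ x t * (ev q x t - g.eval x)) (-1) +
      ν * dX ξ w (fun x t => ev φ x t * (b.eval t - ev q x t)) 1 -
      ν * dX ξ w (fun x t => ev φ x t * (a.eval t - ev q x t)) (-1) = 0

/-- The trace `τ ↦ Q(1, τ)` of a bivariate polynomial on the right spatial boundary
`ξ = 1`, as a univariate polynomial in `τ`. -/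
noncomputable def traceRight (Q : MvPolynomial (Fin 2) ℝ) : Polynomial ℝ :=
  MvPolynomial.eval₂ (Polynomial.C : ℝ →+* Polynomial ℝ) ![(1 : Polynomial ℝ), Polynomial.X] Q

/-!
Since the quadrature is exact up to degree `2p - 1` and `r r'` has degree at most `2p - 1` for
`deg r ≤ p`, summation by parts holds exactly: for `Q ∈ V_p` the volume term `⟨Q (∂_τ Q + ν ∂_ξ Q)⟩`
is the discrete boundary integral of `½ Q²` over the space-time square. Testing the corrector
equation with `q̃_k` and the predictor equation with `ψ_k = q_k - q̃_k` (whose initial term vanishes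
because `q̃_k(·, -1) = g_k`) yields the volume term `⟨q D q⟩ - ⟨ψ D ψ⟩`, so the energy balance of
each element reduces to a pointwise identity between boundary values. What is left over is the
right-flux energy `ν ⟨½ q̃_{k-1}(1, ·)²⟩ - ν ⟨½ q̃_k(1, ·)²⟩`, which telescopes over the periodic mesh.
-/

namespace MvPolynomial

variable {R σ : Type*} [CommSemiring R] [DecidableEq σ]

noncomputable def lineRestrict (Q : MvPolynomial σ R) (x : σ → R) (i : σ) : Polynomial R :=
  aeval (Function.update (fun j => Polynomial.C (x j)) i Polynomial.X) Q

theorem eval_lineRestrict (Q : MvPolynomial σ R) (x : σ → R) (i : σ) (t : R) :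
    (Q.lineRestrict x i).eval t = eval (Function.update x i t) Q := by
  have hv : (fun j => Polynomial.aeval t (Function.update (fun j => Polynomial.C (x j)) i
      Polynomial.X j)) = Function.update x i t := by
    funext j
    by_cases hj : j = i
    · subst hj; simp
    · simp [hj]
  rw [lineRestrict, ← Polynomial.coe_aeval_eq_eval, ← AlgHom.comp_apply, comp_aeval, hv]
  rfl

theorem natDegree_lineRestrict_le (Q : MvPolynomial σ R) (x : σ → R) (i : σ) :
    (Q.lineRestrict x i).natDegree ≤ Q.degreeOf i := by
  rw [lineRestrict, aeval_eq_eval₂Hom, coe_eval₂Hom, eval₂_eq]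
  refine Polynomial.natDegree_sum_le_of_forall_le _ _ fun d hd => ?_
  refine (Polynomial.natDegree_C_mul_le _ _).trans <| (Polynomial.natDegree_prod_le _ _).trans ?_
  calc ∑ j ∈ d.support,
        (Function.update (fun j => Polynomial.C (x j)) i Polynomial.X j ^ d j).natDegree
      ≤ ∑ j ∈ d.support, if i = j then d j else 0 := by
        refine Finset.sum_le_sum fun j _ => ?_
        by_cases hj : j = i
        · subst hj; simp [Polynomial.natDegree_X_pow_le]
        · simp [hj, Ne.symm hj, ← Polynomial.C_pow, -map_pow]
    _ ≤ d i := by rw [Finset.sum_ite_eq]; split_ifs <;> simp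
    _ ≤ Q.degreeOf i := monomial_le_degreeOf i hd

theorem derivative_lineRestrict (Q : MvPolynomial σ R) (x : σ → R) (i : σ) :
    Polynomial.derivative (Q.lineRestrict x i) = (pderiv i Q).lineRestrict x i := by
  induction Q using MvPolynomial.induction_on with
  | C a => simp [lineRestrict]
  | add P R hP hR => simp only [lineRestrict, map_add] at *; rw [hP, hR]
  | mul_X P n hP =>
    simp only [lineRestrict, map_mul, aeval_X, Polynomial.derivative_mul, pderiv_mul, map_add] at *
    rw [hP, pderiv_X]
    by_cases hn : n = i
    · subst hn; simp
    · simp [hn]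

end MvPolynomial

def QuadratureExact {ι : Type*} [Fintype ι] (ξ w : ι → ℝ) (n : ℕ) : Prop :=
  ∀ f : Polynomial ℝ, f.natDegree ≤ n → ∑ i, w i * f.eval (ξ i) = ∫ x in (-1 : ℝ)..1, f.eval x

namespace QuadratureExact

variable {ι : Type*} [Fintype ι] {ξ w : ι → ℝ} {p : ℕ}

theorem sum_mul_derivative (h : QuadratureExact ξ w (2 * p - 1)) (r : Polynomial ℝ)
    (hr : r.natDegree ≤ p) :
    ∑ i, w i * (r.eval (ξ i) * (Polynomial.derivative r).eval (ξ i))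
      = 1 / 2 * r.eval 1 ^ 2 - 1 / 2 * r.eval (-1) ^ 2 := by
  have hdeg : (r * Polynomial.derivative r).natDegree ≤ 2 * p - 1 :=
    Polynomial.natDegree_mul_le.trans (by have := Polynomial.natDegree_derivative_le r; omega)
  have hderiv (x : ℝ) : HasDerivAt (fun y => 1 / 2 * r.eval y ^ 2)
      ((r * Polynomial.derivative r).eval x) x := by
    refine (((r.hasDerivAt x).fun_pow 2).const_mul (1 / 2 : ℝ)).congr_deriv ?_
    rw [Polynomial.eval_mul]
    norm_num
    ring
  simp only [← Polynomial.eval_mul]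
  rw [h _ hdeg, intervalIntegral.integral_eq_sub_of_hasDerivAt (fun x _ => hderiv x)
    ((Polynomial.continuous _).intervalIntegrable _ _)]

theorem sum_eval_mul_pderiv {σ : Type*} [DecidableEq σ] (h : QuadratureExact ξ w (2 * p - 1))
    (Q : MvPolynomial σ ℝ) (i : σ) (hQ : Q.degreeOf i ≤ p) (x : σ → ℝ) :
    ∑ j, w j * (eval (Function.update x i (ξ j)) Q *
        eval (Function.update x i (ξ j)) (pderiv i Q))
      = 1 / 2 * eval (Function.update x i 1) Q ^ 2
        - 1 / 2 * eval (Function.update x i (-1)) Q ^ 2 := by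
  simpa only [MvPolynomial.derivative_lineRestrict, MvPolynomial.eval_lineRestrict] using
    h.sum_mul_derivative _ ((Q.natDegree_lineRestrict_le x i).trans hQ)

end QuadratureExact

theorem eval_update_zero_eq_ev (Q : MvPolynomial (Fin 2) ℝ) (x t s : ℝ) :
    eval (Function.update ![x, t] 0 s) Q = ev Q s t := by
  rw [ev, show Function.update ![x, t] 0 s = ![s, t] from funext fun k => by fin_cases k <;> rfl]

theorem eval_update_one_eq_ev (Q : MvPolynomial (Fin 2) ℝ) (x t s : ℝ) :
    eval (Function.update ![x, t] 1 s) Q = ev Q x s := by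
  rw [ev, show Function.update ![x, t] 1 s = ![x, s] from funext fun k => by fin_cases k <;> rfl]

theorem ev_sub (P Q : MvPolynomial (Fin 2) ℝ) (x t : ℝ) : ev (P - Q) x t = ev P x t - ev Q x t :=
  map_sub _ P Q

theorem sub_mem_Vp {p : ℕ} {P Q : MvPolynomial (Fin 2) ℝ} (hP : P ∈ Vp p) (hQ : Q ∈ Vp p) :
    P - Q ∈ Vp p :=
  ⟨(degreeOf_sub_le 0 P Q).trans (max_le hP.1 hQ.1),
    (degreeOf_sub_le 1 P Q).trans (max_le hP.2 hQ.2)⟩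

noncomputable def dBoundary {p : ℕ} (ξ w : Fin (p + 1) → ℝ) (ν : ℝ) (f : ℝ → ℝ → ℝ) : ℝ :=
  dT ξ w f 1 - dT ξ w f (-1) + ν * (dX ξ w f 1 - dX ξ w f (-1))

theorem dVol_mul_advection_self {p : ℕ} {ξ w : Fin (p + 1) → ℝ}
    (h : QuadratureExact ξ w (2 * p - 1)) (ν : ℝ) {Q : MvPolynomial (Fin 2) ℝ} (hQ : Q ∈ Vp p) :
    dVol ξ w (fun x t => ev Q x t * (ev (pderiv 1 Q) x t + ν * ev (pderiv 0 Q) x t))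
      = dBoundary ξ w ν (fun x t => 1 / 2 * ev Q x t ^ 2) := by
  have hτ (x : ℝ) := h.sum_eval_mul_pderiv Q 1 hQ.2 ![x, 0]
  have hξ (t : ℝ) := h.sum_eval_mul_pderiv Q 0 hQ.1 ![0, t]
  simp only [eval_update_zero_eq_ev, eval_update_one_eq_ev] at hτ hξ
  have hτsum : ∑ i, ∑ j, w i * w j * (ev Q (ξ i) (ξ j) * ev (pderiv 1 Q) (ξ i) (ξ j))
      = dT ξ w (fun x t => 1 / 2 * ev Q x t ^ 2) 1
        - dT ξ w (fun x t => 1 / 2 * ev Q x t ^ 2) (-1) := by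
    simp only [dT, ← Finset.sum_sub_distrib, ← mul_sub, ← hτ, Finset.mul_sum, mul_assoc]
  have hξsum : ∑ i, ∑ j, w i * w j * (ev Q (ξ i) (ξ j) * ev (pderiv 0 Q) (ξ i) (ξ j))
      = dX ξ w (fun x t => 1 / 2 * ev Q x t ^ 2) 1
        - dX ξ w (fun x t => 1 / 2 * ev Q x t ^ 2) (-1) := by
    rw [Finset.sum_comm]
    simp only [dX, ← Finset.sum_sub_distrib, ← mul_sub, ← hξ, Finset.mul_sum]
    exact Finset.sum_congr rfl fun j _ => Finset.sum_congr rfl fun i _ => by ring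
  rw [dBoundary, ← hτsum, ← hξsum, dVol, Finset.mul_sum, ← Finset.sum_add_distrib]
  refine Finset.sum_congr rfl fun i _ => ?_
  rw [Finset.mul_sum, ← Finset.sum_add_distrib]
  exact Finset.sum_congr rfl fun j _ => by ring

theorem traceRight_eval (Q : MvPolynomial (Fin 2) ℝ) (t : ℝ) :
    (traceRight Q).eval t = ev Q 1 t := by
  have h : traceRight Q = Q.lineRestrict ![1, 0] 1 := by
    rw [traceRight, lineRestrict, aeval_def, Polynomial.algebraMap_eq]
    congr
    funext k
    fin_cases k <;> simp
  rw [h, eval_lineRestrict, eval_update_one_eq_ev]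

theorem energy_change_element {p : ℕ} {ξ w : Fin (p + 1) → ℝ}
    (hquad : QuadratureExact ξ w (2 * p - 1)) {ν : ℝ} {g a b : Polynomial ℝ}
    {qt q : MvPolynomial (Fin 2) ℝ} (hqtV : qt ∈ Vp p) (hqV : q ∈ Vp p)
    (hpred : PredictorEq ξ w ν g qt) (hinit : ∀ x, ev qt x (-1) = g.eval x)
    (hcor : CorrectorEq ξ w ν g a b q) (hb : ∀ t, b.eval t = ev qt 1 t) :
    ∑ i, w i * (1 / 2 * ev q (ξ i) 1 ^ 2) - ∑ i, w i * (1 / 2 * g.eval (ξ i) ^ 2)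
      = ∑ i, w i * (1 / 2 * ev (q - qt) (ξ i) 1 ^ 2)
        - ν * ∑ j, w j * (1 / 2 * (a.eval (ξ j) - ev qt (-1) (ξ j)) ^ 2)
        + ν * (∑ j, w j * (1 / 2 * a.eval (ξ j) ^ 2) - ∑ j, w j * (1 / 2 * ev qt 1 (ξ j) ^ 2)) := by
  have hψV := sub_mem_Vp hqV hqtV
  have hvol : dVol ξ w (fun x t => ev qt x t * (ev (pderiv 1 q) x t + ν * ev (pderiv 0 q) x t))
      + dVol ξ w (fun x t => ev (q - qt) x t * (ev (pderiv 1 qt) x t + ν * ev (pderiv 0 qt) x t))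
      = dVol ξ w (fun x t => ev q x t * (ev (pderiv 1 q) x t + ν * ev (pderiv 0 q) x t))
        - dVol ξ w (fun x t => ev (q - qt) x t *
            (ev (pderiv 1 (q - qt)) x t + ν * ev (pderiv 0 (q - qt)) x t)) := by
    simp only [dVol, map_sub, ev_sub, ← Finset.sum_add_distrib, ← Finset.sum_sub_distrib]
    exact Finset.sum_congr rfl fun i _ => Finset.sum_congr rfl fun j _ => by ring
  have hψ_init : dT ξ w (fun x t => ev (q - qt) x t * (ev qt x t - g.eval x)) (-1) = 0 := by
    simp [dT, hinit]
  have hbal : dBoundary ξ w ν (fun x t => 1 / 2 * ev q x t ^ 2)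
      - dBoundary ξ w ν (fun x t => 1 / 2 * ev (q - qt) x t ^ 2)
      + dT ξ w (fun x t => ev qt x t * (ev q x t - g.eval x)) (-1)
      + ν * dX ξ w (fun x t => ev qt x t * (b.eval t - ev q x t)) 1
      - ν * dX ξ w (fun x t => ev qt x t * (a.eval t - ev q x t)) (-1) = 0 := by
    rw [← dVol_mul_advection_self hquad ν hqV, ← dVol_mul_advection_self hquad ν hψV, ← hvol]
    linear_combination hcor qt hqtV + hpred (q - qt) hψV - hψ_init
  rw [← sub_eq_zero]
  simp only [dBoundary, dT, dX, Finset.mul_sum, ← Finset.sum_sub_distrib,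
    ← Finset.sum_add_distrib] at hbal ⊢
  rw [← hbal]
  refine Finset.sum_congr rfl fun j _ => ?_
  simp only [ev_sub, hinit, hb]
  ring

theorem Fintype.sum_comp_sub_sub_eq_zero {G M : Type*} [AddGroup G] [Fintype G] [AddCommGroup M]
    (f : G → M) (c : G) : ∑ k, (f (k - c) - f k) = 0 := by
  rw [Finset.sum_sub_distrib, sub_eq_zero]
  exact Equiv.sum_comp (Equiv.subRight c) f

theorem energy_change_one_step_general
    (p : ℕ)
    (ξ w : Fin (p + 1) → ℝ)
    (hquad : ∀ f : Polynomial ℝ, f.natDegree ≤ 2 * p - 1 →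
      ∑ i, w i * f.eval (ξ i) = ∫ x in (-1 : ℝ)..1, f.eval x)
    (K : ℕ) [NeZero K]
    (ν : ℝ)
    (g : ZMod K → Polynomial ℝ)
    (qt : ZMod K → MvPolynomial (Fin 2) ℝ) (hqtV : ∀ k, qt k ∈ Vp p)
    (hpred : ∀ k, PredictorEq ξ w ν (g k) (qt k))
    (hinit : ∀ k, ∀ x : ℝ, ev (qt k) x (-1) = (g k).eval x)
    (q : ZMod K → MvPolynomial (Fin 2) ℝ) (hqV : ∀ k, q k ∈ Vp p)
    (hcor : ∀ k, CorrectorEq ξ w ν (g k) (traceRight (qt (k - 1))) (traceRight (qt k)) (q k)) :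
    ∑ k : ZMod K,
        (∑ i, w i * (1 / 2 * (ev (q k) (ξ i) 1) ^ 2) -
          ∑ i, w i * (1 / 2 * ((g k).eval (ξ i)) ^ 2))
      = ∑ k : ZMod K,
          (∑ i, w i * (1 / 2 * (ev (q k - qt k) (ξ i) 1) ^ 2) -
            ν * ∑ j, w j *
              (1 / 2 * (ev (qt (k - 1)) 1 (ξ j) - ev (qt k) (-1) (ξ j)) ^ 2)) := by
  have hstep (k : ZMod K) := energy_change_element hquad (hqtV k) (hqV k) (hpred k) (hinit k)
    (hcor k) (traceRight_eval (qt k))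
  simp only [traceRight_eval] at hstep
  have htel := Fintype.sum_comp_sub_sub_eq_zero
    (fun k => ν * ∑ j, w j * (1 / 2 * ev (qt k) 1 (ξ j) ^ 2)) 1
  simp only [← mul_sub] at htel
  rw [Finset.sum_congr rfl fun k _ => hstep k, Finset.sum_add_distrib, htel, add_zero]

/-- Theorem 4.1: energy change of the 1D locally implicit ADER-DG
scheme.  Consider the periodic 1D scheme with `K ≥ 1` elements, CFL number `ν ≥ 0`,
previous-step data `g k`, predictors `q̃ k` (satisfying the predictor equation with data
`g k`) and correctors `q k` (satisfying the corrector equation with data `g k`,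
left-flux trace `τ ↦ q̃ (k−1) (1, τ)` and right-flux trace `τ ↦ q̃ k (1, τ)`); assume
moreover that each predictor matches the previous solution at the beginning of the time
step: `q̃ k (ξ, −1) = g k (ξ)` for all `ξ`.  With `ψ k := q k − q̃ k`, the energy change
over one step is
`∑ k [∑ i w i ½ (q k)(ξ i, 1)² − ∑ i w i ½ (g k)(ξ i)²]`
`= ∑ k [∑ i w i ½ (ψ k)(ξ i, 1)² − ν ∑ j w j ½ ((q̃ (k−1))(1, ξ j) − (q̃ k)(−1, ξ j))²]`. -/
theorem energy_change_one_step
    (p : ℕ) (hp : 1 ≤ p)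
    (ξ w : Fin (p + 1) → ℝ)
    (hmono : StrictMono ξ)
    (hξ0 : ξ 0 = -1) (hξlast : ξ (Fin.last p) = 1)
    (hw : ∀ i, 0 < w i)
    (hquad : ∀ f : Polynomial ℝ, f.natDegree ≤ 2 * p - 1 →
      ∑ i, w i * f.eval (ξ i) = ∫ x in (-1 : ℝ)..1, f.eval x)
    (K : ℕ) (hK : 1 ≤ K) [NeZero K]
    (ν : ℝ) (hν : 0 ≤ ν)
    (g : ZMod K → Polynomial ℝ) (hg : ∀ k, (g k).natDegree ≤ p)
    (qt : ZMod K → MvPolynomial (Fin 2) ℝ) (hqtV : ∀ k, qt k ∈ Vp p)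
    (hpred : ∀ k, PredictorEq ξ w ν (g k) (qt k))
    (hinit : ∀ k, ∀ x : ℝ, ev (qt k) x (-1) = (g k).eval x)
    (q : ZMod K → MvPolynomial (Fin 2) ℝ) (hqV : ∀ k, q k ∈ Vp p)
    (hcor : ∀ k, CorrectorEq ξ w ν (g k) (traceRight (qt (k - 1))) (traceRight (qt k)) (q k)) :
    ∑ k : ZMod K,
        (∑ i, w i * (1 / 2 * (ev (q k) (ξ i) 1) ^ 2) -
          ∑ i, w i * (1 / 2 * ((g k).eval (ξ i)) ^ 2))
      = ∑ k : ZMod K,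
          (∑ i, w i * (1 / 2 * (ev (q k - qt k) (ξ i) 1) ^ 2) -
            ν * ∑ j, w j *
              (1 / 2 * (ev (qt (k - 1)) 1 (ξ j) - ev (qt k) (-1) (ξ j)) ^ 2)) :=
  energy_change_one_step_general p ξ w hquad K ν g qt hqtV hpred hinit q hqV hcor
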